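/- Let P be a partially ordered set. If P is well-quasi-ordered and the set 𝒥^¬↓(P) of non-principal ideals of P is linearly ordered by inclusion, then P is better-quasi-ordered. -/

import Mathlib

open Set

/-- `s` is an initial segment of the finite set `t` (w.r.t. increasing enumerations). -/
def InitSeg (s t : Finset ℕ) : Prop :=
  s ⊆ t ∧ ∀ x ∈ s, ∀ y ∈ t, y ∉ s → x < y

/-- `s` is an initial segment of the set `X ⊆ ℕ`. -/
def InitSegSet (s : Finset ℕ) (X : Set ℕ) : Prop :=
  ↑s ⊆ X ∧ ∀ x ∈ s, ∀ y ∈ X, y ∉ s → x < y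

/-- The union of a family of finite subsets of `ℕ`. -/
def unionOf (B : Set (Finset ℕ)) : Set ℕ := ⋃ s ∈ B, (s : Set ℕ)

/-- `B` is a block: `B` is infinite and every infinite subset of `⋃ B` has a nonempty
initial segment belonging to `B`. -/
def IsBlock (B : Set (Finset ℕ)) : Prop :=
  B.Infinite ∧ ∀ X : Set ℕ, X ⊆ unionOf B → X.Infinite →
    ∃ s ∈ B, s.Nonempty ∧ InitSegSet s X

/-- `B` is a barrier: a block no member of which is a proper subset of another member. -/
def IsBarrier (B : Set (Finset ℕ)) : Prop :=
  IsBlock B ∧ ∀ s ∈ B, ∀ t ∈ B, s ⊆ t → s = t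

/-- `B` is a thin block: a block which is an antichain under the initial-segment order. -/
def IsThinBlock (B : Set (Finset ℕ)) : Prop :=
  IsBlock B ∧ ∀ s ∈ B, ∀ t ∈ B, InitSeg s t → s = t

/-- `s ◁ t`: there is `r` such that `s` is a proper initial segment of `r` and `t` is
obtained from `r` by removing its least element. -/
def Tri (s t : Finset ℕ) : Prop :=
  ∃ r : Finset ℕ, InitSeg s r ∧ s ≠ r ∧ ∃ a ∈ r, (∀ b ∈ r, a ≤ b) ∧ t = r.erase a

/-- The map `f` is good on `B` w.r.t. the quasi-order `le`. -/
def GoodPair {Q : Type*} (le : Q → Q → Prop) (B : Set (Finset ℕ)) (f : Finset ℕ → Q) : Prop :=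
  ∃ s ∈ B, ∃ t ∈ B, Tri s t ∧ le (f s) (f t)

/-- A quasi-order is better-quasi-ordered if every map from every barrier into it is good. -/
def IsBqo {Q : Type*} (le : Q → Q → Prop) : Prop :=
  ∀ B : Set (Finset ℕ), IsBarrier B → ∀ f : Finset ℕ → Q, GoodPair le B f

/-- A quasi-order is well-quasi-ordered if it has no infinite strictly descending sequence
and no infinite antichain. -/
def IsWqo {Q : Type*} (le : Q → Q → Prop) : Prop :=
  (¬ ∃ f : ℕ → Q, ∀ n, le (f (n + 1)) (f n) ∧ ¬ le (f n) (f (n + 1))) ∧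
    ¬ ∃ f : ℕ → Q, ∀ m n : ℕ, m ≠ n → ¬ le (f m) (f n)

/-- The strict lexicographic order on finite subsets of `ℕ` (via increasing enumerations;
a proper initial segment is lexicographically smaller). -/
def lexLT (s t : Finset ℕ) : Prop :=
  List.Lex (· < ·) (s.sort (· ≤ ·)) (t.sort (· ≤ ·))

/-- The order type of `B` under the lexicographic order is at most `α`: there is a
map of `B` into the ordinals `< α` which is strictly increasing w.r.t. `lexLT`. -/
def TypeLE (B : Set (Finset ℕ)) (α : Ordinal) : Prop :=
  ∃ g : Finset ℕ → Ordinal, (∀ s ∈ B, g s < α) ∧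
    ∀ s ∈ B, ∀ t ∈ B, lexLT s t → g s < g t

/-- A quasi-order is `α`-better-quasi-ordered if every map from a barrier of order type
at most `α` into it is good. -/
def IsAlphaBqo (α : Ordinal) {Q : Type*} (le : Q → Q → Prop) : Prop :=
  ∀ B : Set (Finset ℕ), IsBarrier B → TypeLE B α →
    ∀ f : Finset ℕ → Q, GoodPair le B f

/-- Domination quasi-order on subsets of a quasi-ordered set. -/
def DomRel {Q : Type*} (le : Q → Q → Prop) (A B : Set Q) : Prop :=
  ∀ a ∈ A, ∃ b ∈ B, le a b

/-- `I` is an ideal: nonempty, downward closed and up-directed. -/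
def IsIdealRel {Q : Type*} (le : Q → Q → Prop) (I : Set Q) : Prop :=
  I.Nonempty ∧ (∀ x y, le x y → y ∈ I → x ∈ I) ∧
    ∀ x ∈ I, ∀ y ∈ I, ∃ z ∈ I, le x z ∧ le y z

/-- `I` is principal: it has a greatest element. -/
def IsPrincipalRel {Q : Type*} (le : Q → Q → Prop) (I : Set Q) : Prop :=
  ∃ a ∈ I, ∀ x ∈ I, le x a

/-- A maximal antichain: an antichain not properly contained in any other antichain. -/
def IsMaxAntichainRel {Q : Type*} (le : Q → Q → Prop) (A : Set Q) : Prop :=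
  IsAntichain le A ∧ ∀ B : Set Q, IsAntichain le B → A ⊆ B → A = B

/-- An interval order: no `a < b`, `c < d` with each of `a, b` incomparable to each
of `c, d`. -/
def IsIntervalOrder (P : Type*) [Preorder P] : Prop :=
  ¬ ∃ a b c d : P, a < b ∧ c < d ∧
    ¬ a ≤ c ∧ ¬ c ≤ a ∧ ¬ a ≤ d ∧ ¬ d ≤ a ∧
    ¬ b ≤ c ∧ ¬ c ≤ b ∧ ¬ b ≤ d ∧ ¬ d ≤ b

/-- `a ≤_pred b` iff every strict predecessor of `a` is a strict predecessor of `b`. -/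
def predLE {P : Type*} [PartialOrder P] (a b : P) : Prop := ∀ x, x < a → x < b

/-- `a ≤_succ b` iff every strict successor of `b` is a strict successor of `a`. -/
def succLE {P : Type*} [PartialOrder P] (a b : P) : Prop := ∀ y, b < y → a < y

/-- `a ≤_crit b` iff `a ≤_pred b` and `a ≤_succ b`. -/
def critLE {P : Type*} [PartialOrder P] (a b : P) : Prop := predLE a b ∧ succLE a b

/-!
A bad map `f : B → P` on a barrier gives a map `g X = f (segIn B X)` on the infinite subsets of
`⋃ B` which is locally constant and bad for the shift: `¬ g X ≤ g (X \ {min X})`, because the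
members of `B` that are initial segments of `X` and of `X \ {min X}` are related by `◁`.

Call `a` ideal-below `b` if every non-principal ideal containing `b` contains `a`. By Galvin's
lemma there is an infinite `N` on which `g X` is either always or never ideal-below
`g (X \ {min X})`. In the second case, the non-principal ideals separating consecutive values along
`N, N \ {min N}, …` form a decreasing sequence, since they form a chain, and any good pair of this
sequence in the wqo `P` lands in one of them. In the first case, values ideal-above a fixed element
but never `≥` it cannot contain a strictly increasing sequence, whose downward closure would be a
non-principal ideal; so by wqo they are finitely many, and Galvin's lemma makes them constant.
Starting from the finite part of `N` fixed by local constancy at `N` and removing one element at a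
time, this ends with `g M = g (M \ {min M})`, contradicting badness.
-/

open Set

section Wqo

variable {P : Type*}

theorem IsWqo.wellQuasiOrderedLE [Preorder P] (h : IsWqo ((· ≤ ·) : P → P → Prop)) :
    WellQuasiOrderedLE P := by
  refine wellQuasiOrderedLE_iff.2 ⟨⟨wellFounded_iff_isEmpty_descending_chain.2 ⟨?_⟩⟩, ?_⟩
  · exact fun ⟨f, hf⟩ => h.1 ⟨f, fun n => lt_iff_le_not_ge.1 (hf n)⟩
  · intro s hs
    by_contra hinf
    let f := Set.Infinite.natEmbedding s hinf
    exact h.2 ⟨fun n => f n, fun m n hmn =>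
      hs (f m).2 (f n).2 fun he => hmn (f.injective (Subtype.ext he))⟩

theorem exists_strictMono_of_infinite [PartialOrder P] [WellQuasiOrderedLE P] {V : Set P}
    (hV : V.Infinite) : ∃ c : ℕ → P, StrictMono c ∧ ∀ n, c n ∈ V := by
  let f := hV.natEmbedding
  obtain ⟨g, hg⟩ := (wellQuasiOrdered_le (α := P)).exists_monotone_subseq (fun n => (f n : P))
  refine ⟨fun n => f (g n), Monotone.strictMono_of_injective (fun m n hmn => hg m n hmn) ?_,
    fun n => (f (g n)).2⟩
  exact fun m n he => g.injective (f.injective (Subtype.ext he))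

end Wqo

section Ideals

variable {P : Type*}

def IsNonprincipalIdeal [LE P] (I : Set P) : Prop :=
  IsIdealRel (· ≤ ·) I ∧ ¬ IsPrincipalRel (· ≤ ·) I

def IdealLE [LE P] (a b : P) : Prop :=
  ∀ I : Set P, IsNonprincipalIdeal I → b ∈ I → a ∈ I

theorem isNonprincipalIdeal_of_strictMono [Preorder P] {c : ℕ → P} (hc : StrictMono c) :
    IsNonprincipalIdeal {p | ∃ i, p ≤ c i} := by
  refine ⟨⟨⟨c 0, 0, le_rfl⟩, fun x y hxy ⟨i, hy⟩ => ⟨i, hxy.trans hy⟩, ?_⟩, ?_⟩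
  · rintro x ⟨i, hx⟩ y ⟨j, hy⟩
    exact ⟨c (max i j), ⟨max i j, le_rfl⟩, hx.trans (hc.monotone (le_max_left i j)),
      hy.trans (hc.monotone (le_max_right i j))⟩
  · rintro ⟨a, ⟨i, hai⟩, hmax⟩
    exact (hc (Nat.lt_succ_self i)).not_ge ((hmax _ ⟨i + 1, le_rfl⟩).trans hai)

theorem exists_le_of_forall_idealLE [PartialOrder P] [WellQuasiOrderedLE P] {V : Set P}
    (hV : V.Infinite) {q : P} (hq : ∀ v ∈ V, IdealLE q v) : ∃ v ∈ V, q ≤ v := by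
  obtain ⟨c, hc, hcV⟩ := exists_strictMono_of_infinite hV
  obtain ⟨i, hi⟩ := hq (c 0) (hcV 0) _ (isNonprincipalIdeal_of_strictMono hc) ⟨0, le_rfl⟩
  exact ⟨c i, hcV i, hi⟩

/-- When the non-principal ideals form a chain, a sequence in a wqo cannot keep leaving them:
the witnessing ideals would be nested, and a good pair of the sequence would lie in one of them. -/
theorem exists_idealLE_succ [Preorder P] [WellQuasiOrderedLE P]
    (hchain : IsChain (· ⊆ ·) {I : Set P | IsNonprincipalIdeal I}) (p : ℕ → P) :
    ∃ k, IdealLE (p k) (p (k + 1)) := by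
  by_contra! h
  simp only [IdealLE, not_forall, exists_prop] at h
  choose I hI hmem hnot using h
  have hanti : Antitone I := antitone_nat_of_succ_le fun k =>
    (hchain.total (hI (k + 1)) (hI k)).resolve_right fun hsub => hnot (k + 1) (hsub (hmem k))
  obtain ⟨i, j, hij, hle⟩ := wellQuasiOrdered_le fun k => p (k + 1)
  exact hnot (i + 1) ((hI (i + 1)).1.2.1 _ _ hle (hanti hij (hmem j)))

end Ideals

section InfiniteSubsets

def eraseMin (X : Set ℕ) : Set ℕ := X \ {sInf X}

variable {X Y T : Set ℕ}

theorem eraseMin_subset : eraseMin X ⊆ X := sdiff_subset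

theorem Set.Infinite.eraseMin (hX : X.Infinite) : (eraseMin X).Infinite :=
  hX.sdiff (finite_singleton _)

theorem sInf_lt_of_mem_eraseMin {y : ℕ} (hy : y ∈ eraseMin X) : sInf X < y :=
  (Nat.sInf_le hy.1).lt_of_ne (Ne.symm hy.2)

theorem insert_sInf_eraseMin (hX : X.Nonempty) : insert (sInf X) (eraseMin X) = X := by
  rw [eraseMin, insert_sdiff_singleton, insert_eq_of_mem (Nat.sInf_mem hX)]

theorem eraseMin_insert {a : ℕ} (ha : ∀ y ∈ Y, a < y) : eraseMin (insert a Y) = Y := by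
  have hmin : sInf (insert a Y) = a := le_antisymm (Nat.sInf_le (mem_insert a Y))
    (le_csInf (insert_nonempty a Y) (by rintro y (rfl | hy); exacts [le_rfl, (ha y hy).le]))
  rw [eraseMin, hmin, insert_sdiff_self_of_notMem fun h => lt_irrefl a (ha a h)]

theorem iterate_eraseMin_subset (k : ℕ) : eraseMin^[k] X ⊆ X :=
  Function.Iterate.rec (· ⊆ X) subset_rfl (fun _ h => eraseMin_subset.trans h) k

theorem Set.Infinite.iterate_eraseMin (hX : X.Infinite) (k : ℕ) :
    (_root_.eraseMin^[k] X).Infinite :=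
  Function.Iterate.rec Set.Infinite hX (fun _ h => h.eraseMin) k

theorem sInf_eq_of_agree (hX : X.Nonempty) (h : ∀ m ≤ sInf X, m ∈ Y ↔ m ∈ X) :
    sInf Y = sInf X := by
  have hY : sInf X ∈ Y := (h _ le_rfl).2 (Nat.sInf_mem hX)
  have hle : sInf Y ≤ sInf X := Nat.sInf_le hY
  exact hle.antisymm (Nat.sInf_le ((h _ hle).1 (Nat.sInf_mem ⟨_, hY⟩)))

noncomputable def initPart (X : Set ℕ) (n : ℕ) : Finset ℕ :=
  ((finite_Iio n).inter_of_right X).toFinset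

theorem mem_initPart {n m : ℕ} : m ∈ initPart X n ↔ m ∈ X ∧ m < n := by
  simp [initPart]

theorem mem_initPart_union_iff {n m : ℕ} (hT : ∀ y ∈ T, n ≤ y) (hm : m < n) :
    m ∈ (↑(initPart X n) ∪ T : Set ℕ) ↔ m ∈ X := by
  simp only [mem_union, Finset.mem_coe, mem_initPart, hm, and_true, or_iff_left_iff_imp]
  exact fun hmT => absurd (hT m hmT) (not_le.2 hm)

/-- Continuity of `c` on the infinite subsets of `A`, for the product topology on `Set ℕ` and the
discrete topology on `β`. -/
def IsLocallyConstantOnInfinite {β : Type*} (c : Set ℕ → β) (A : Set ℕ) : Prop :=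
  ∀ X ⊆ A, X.Infinite → ∃ n, ∀ Y ⊆ A, Y.Infinite → (∀ m < n, m ∈ Y ↔ m ∈ X) → c Y = c X

namespace IsLocallyConstantOnInfinite

variable {β γ δ : Type*} {c : Set ℕ → β} {A : Set ℕ}

theorem mono (hc : IsLocallyConstantOnInfinite c A) {A' : Set ℕ} (hA' : A' ⊆ A) :
    IsLocallyConstantOnInfinite c A' := fun X hX hXi =>
  (hc X (hX.trans hA') hXi).imp fun _ hn Y hY hYi => hn Y (hY.trans hA') hYi

theorem comp (hc : IsLocallyConstantOnInfinite c A) (f : β → γ) :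
    IsLocallyConstantOnInfinite (fun X => f (c X)) A := fun X hX hXi =>
  (hc X hX hXi).imp fun _ hn Y hY hYi hag => congrArg f (hn Y hY hYi hag)

theorem map₂ {c' : Set ℕ → γ} (hc : IsLocallyConstantOnInfinite c A)
    (hc' : IsLocallyConstantOnInfinite c' A) (f : β → γ → δ) :
    IsLocallyConstantOnInfinite (fun X => f (c X) (c' X)) A := by
  intro X hX hXi
  obtain ⟨n, hn⟩ := hc X hX hXi
  obtain ⟨n', hn'⟩ := hc' X hX hXi
  refine ⟨max n n', fun Y hY hYi hag => ?_⟩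
  dsimp only
  rw [hn Y hY hYi fun m hm => hag m (lt_max_of_lt_left hm),
    hn' Y hY hYi fun m hm => hag m (lt_max_of_lt_right hm)]

theorem comp_eraseMin (hc : IsLocallyConstantOnInfinite c A) :
    IsLocallyConstantOnInfinite (fun X => c (eraseMin X)) A := by
  intro X hX hXi
  obtain ⟨n, hn⟩ := hc (eraseMin X) (eraseMin_subset.trans hX) hXi.eraseMin
  refine ⟨max n (sInf X + 1), fun Y hY hYi hag => ?_⟩
  have hmin : sInf Y = sInf X :=
    sInf_eq_of_agree hXi.nonempty fun m hm => hag m (lt_max_of_lt_right (Nat.lt_succ_of_le hm))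
  refine hn _ (eraseMin_subset.trans hY) hYi.eraseMin fun m hm => ?_
  simp only [eraseMin, mem_sdiff, mem_singleton_iff, hmin, hag m (lt_max_of_lt_left hm)]

theorem comp_union_left (hc : IsLocallyConstantOnInfinite c A) {S : Set ℕ} (hS : S ⊆ A) :
    IsLocallyConstantOnInfinite (fun T => c (S ∪ T)) A := by
  intro T hT hTi
  obtain ⟨n, hn⟩ := hc (S ∪ T) (union_subset hS hT) (hTi.mono subset_union_right)
  exact ⟨n, fun Y hY hYi hag => hn _ (union_subset hS hY) (hYi.mono subset_union_right)
    fun m hm => or_congr_right (hag m hm)⟩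

end IsLocallyConstantOnInfinite

end InfiniteSubsets

theorem exists_seq_of_forall_exists {σ : Type*} (Inv : σ → Prop) (R : σ → σ → Prop) {x₀ : σ}
    (h₀ : Inv x₀) (h : ∀ x, Inv x → ∃ y, Inv y ∧ R x y) :
    ∃ x : ℕ → σ, x 0 = x₀ ∧ ∀ n, Inv (x n) ∧ R (x n) (x (n + 1)) := by
  choose next hnext hR using h
  let y : ℕ → {x // Inv x} :=
    fun n => Nat.rec ⟨x₀, h₀⟩ (fun _ x => ⟨next x.1 x.2, hnext x.1 x.2⟩) n
  exact ⟨fun n => (y n).1, rfl, fun n => ⟨(y n).2, hR _ _⟩⟩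

namespace Galvin

variable (p : Set ℕ → Prop)

/-- Galvin–Prikry combinatorial forcing; `Accepts p s A` reads "`A` accepts `s`". -/
def Accepts (s : Finset ℕ) (A : Set ℕ) : Prop :=
  ∀ T ⊆ A, T.Infinite → (∀ x ∈ s, ∀ y ∈ T, x < y) → p (↑s ∪ T)

def Rejects (s : Finset ℕ) (A : Set ℕ) : Prop :=
  ∀ B ⊆ A, B.Infinite → ¬ Accepts p s B

variable {p} {s : Finset ℕ} {A : Set ℕ}

theorem Accepts.mono (h : Accepts p s A) {A' : Set ℕ} (hA' : A' ⊆ A) : Accepts p s A' :=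
  fun T hT => h T (hT.trans hA')

theorem Rejects.mono (h : Rejects p s A) {A' : Set ℕ} (hA' : A' ⊆ A) : Rejects p s A' :=
  fun B hB => h B (hB.trans hA')

/-- If the conclusion failed, we could pick `b₀ < b₁ < ⋯` with nested `C₀ ⊇ C₁ ⊇ ⋯` such that
`C (n + 1)` accepts `insert (b n) s`; then `range b` would accept `s`. -/
theorem exists_rejects_insert (hA : A.Infinite) (hs : Rejects p s A) :
    ∃ A' ⊆ A, A'.Infinite ∧ ∀ b ∈ A', Rejects p (insert b s) A' := by
  by_contra! H
  have step : ∀ C : Set ℕ, C ⊆ A ∧ C.Infinite → ∃ C' : Set ℕ, (C' ⊆ A ∧ C'.Infinite) ∧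
      C' ⊆ C ∧ ∃ b ∈ C, (∀ y ∈ C', b < y) ∧ Accepts p (insert b s) C' := by
    rintro C ⟨hCA, hC⟩
    obtain ⟨b, hbC, hb⟩ := H C hCA hC
    simp only [Rejects, not_forall, not_not, exists_prop] at hb
    obtain ⟨B, hBC, hB, hacc⟩ := hb
    have hsub : B \ Iic b ⊆ C := sdiff_subset.trans hBC
    exact ⟨B \ Iic b, ⟨hsub.trans hCA, hB.sdiff (finite_Iic b)⟩, hsub, b, hbC,
      fun y hy => not_le.1 hy.2, hacc.mono sdiff_subset⟩
  obtain ⟨C, hC0, hC⟩ := exists_seq_of_forall_exists _ _ ⟨subset_rfl, hA⟩ step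
  choose b hbC hbC' hacc using fun n => (hC n).2.2
  have hanti : Antitone C := antitone_nat_of_succ_le fun n => (hC n).2.1
  have hb : StrictMono b := fun m n hmn => hbC' m (b n) (hanti hmn (hbC n))
  refine hs (range b) (range_subset_iff.2 fun n => (hC n).1.1 (hbC n))
    (infinite_range_of_injective hb.injective) fun T hT hTi hsT => ?_
  obtain ⟨i, hi⟩ := hT (Nat.sInf_mem hTi.nonempty)
  have hsplit : (↑s ∪ T : Set ℕ) = ↑(insert (b i) s) ∪ eraseMin T := by
    rw [Finset.coe_insert, insert_union, ← union_insert, hi, insert_sInf_eraseMin hTi.nonempty]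
  rw [hsplit]
  refine hacc i _ (fun y hy => ?_) hTi.eraseMin fun x hx y hy => ?_
  · obtain ⟨j, rfl⟩ := hT (eraseMin_subset hy)
    exact hanti (hb.lt_iff_lt.1 (hi ▸ sInf_lt_of_mem_eraseMin hy)) (hbC j)
  · rcases Finset.mem_insert.1 hx with rfl | hx
    · exact hi ▸ sInf_lt_of_mem_eraseMin hy
    · exact hsT x hx y (eraseMin_subset hy)

theorem exists_rejects_insert_of_finset (F : Finset (Finset ℕ)) (hA : A.Infinite)
    (hF : ∀ s ∈ F, Rejects p s A) :
    ∃ A' ⊆ A, A'.Infinite ∧ ∀ s ∈ F, ∀ b ∈ A', Rejects p (insert b s) A' := by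
  classical
  induction F using Finset.induction_on with
  | empty => exact ⟨A, subset_rfl, hA, by simp⟩
  | insert t F _ ih =>
    obtain ⟨A₁, hA₁A, hA₁, hA₁F⟩ := ih fun s hs => hF s (Finset.mem_insert_of_mem hs)
    obtain ⟨A₂, hA₂A₁, hA₂, hA₂t⟩ :=
      exists_rejects_insert hA₁ ((hF t (Finset.mem_insert_self t F)).mono hA₁A)
    refine ⟨A₂, hA₂A₁.trans hA₁A, hA₂, fun s hs b hb => ?_⟩
    rcases Finset.mem_insert.1 hs with rfl | hs
    · exact hA₂t b hb
    · exact (hA₁F s hs b (hA₂A₁ hb)).mono hA₂A₁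

theorem exists_rejects_subset_insert {F : Finset ℕ} (hA : A.Infinite)
    (hF : ∀ s ⊆ F, Rejects p s A) :
    ∃ b ∈ A, ∃ A' ⊆ A, A'.Infinite ∧ (∀ y ∈ A', b < y) ∧ ∀ s ⊆ insert b F, Rejects p s A' := by
  classical
  obtain ⟨A', hA'A, hA', hA'rej⟩ := exists_rejects_insert_of_finset F.powerset hA
    fun s hs => hF s (Finset.mem_powerset.1 hs)
  have hbA' : sInf A' ∈ A' := Nat.sInf_mem hA'.nonempty
  refine ⟨sInf A', hA'A hbA', eraseMin A', eraseMin_subset.trans hA'A, hA'.eraseMin,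
    fun y hy => sInf_lt_of_mem_eraseMin hy, fun s hs => Rejects.mono ?_ eraseMin_subset⟩
  have herase : s.erase (sInf A') ⊆ F := Finset.subset_insert_iff.1 hs
  by_cases hbs : sInf A' ∈ s
  · rw [← Finset.insert_erase hbs]
    exact hA'rej _ (Finset.mem_powerset.2 herase) _ hbA'
  · rw [Finset.erase_eq_of_notMem hbs] at herase
    exact (hF s herase).mono hA'A

theorem exists_strictMono_rejects (hA : A.Infinite) (h₀ : Rejects p ∅ A) :
    ∃ b : ℕ → ℕ, StrictMono b ∧ (∀ n, b n ∈ A) ∧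
      ∀ n, ∀ s ⊆ (Finset.range n).image b, Rejects p s (b '' Ici n) := by
  let Inv : Finset ℕ × Set ℕ → Prop := fun x => x.2 ⊆ A ∧ x.2.Infinite ∧
    (∀ a ∈ x.1, ∀ y ∈ x.2, a < y) ∧ ∀ s ⊆ x.1, Rejects p s x.2
  let R : Finset ℕ × Set ℕ → Finset ℕ × Set ℕ → Prop :=
    fun x y => y.2 ⊆ x.2 ∧ ∃ b ∈ x.2, y.1 = insert b x.1
  have step : ∀ x, Inv x → ∃ y, Inv y ∧ R x y := by
    rintro ⟨F, C⟩ ⟨hCA, hC, hFC, hrej⟩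
    obtain ⟨b, hbC, C', hC'C, hC', hbC', hC'rej⟩ := exists_rejects_subset_insert hC hrej
    refine ⟨(insert b F, C'), ⟨hC'C.trans hCA, hC', fun a ha y hy => ?_, hC'rej⟩,
      hC'C, b, hbC, rfl⟩
    rcases Finset.mem_insert.1 ha with rfl | ha
    exacts [hbC' y hy, hFC a ha y (hC'C hy)]
  obtain ⟨x, hx0, hx⟩ := exists_seq_of_forall_exists Inv R
    (x₀ := (∅, A)) ⟨subset_rfl, hA, by simp, fun s hs => Finset.subset_empty.1 hs ▸ h₀⟩ step
  choose b hbC hF using fun n => (hx n).2.2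
  have hanti : Antitone fun n => (x n).2 := antitone_nat_of_succ_le fun n => (hx n).2.1
  have hFmono : Monotone fun n => (x n).1 :=
    monotone_nat_of_le_succ fun n => (hF n).symm ▸ Finset.subset_insert _ _
  have hbF : ∀ m n, m < n → b m ∈ (x n).1 := fun m n hmn => by
    refine hFmono (Nat.succ_le_of_lt hmn) ?_
    simp only [hF m, Finset.mem_insert_self]
  refine ⟨b, fun m n hmn => (hx n).1.2.2.1 _ (hbF m n hmn) _ (hbC n),
    fun n => (hx n).1.1 (hbC n), fun n s hs => ((hx n).1.2.2.2 s ?_).mono ?_⟩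
  · intro a ha
    obtain ⟨m, hm, rfl⟩ := Finset.mem_image.1 (hs ha)
    exact hbF m n (Finset.mem_range.1 hm)
  · rintro _ ⟨m, hm, rfl⟩
    exact hanti hm (hbC m)

/-- **Galvin's lemma** (the clopen case of the Galvin–Prikry theorem). -/
theorem exists_homogeneous (hA : A.Infinite) (hp : IsLocallyConstantOnInfinite p A) :
    ∃ N ⊆ A, N.Infinite ∧ ((∀ X ⊆ N, X.Infinite → p X) ∨ ∀ X ⊆ N, X.Infinite → ¬ p X) := by
  by_cases h₀ : Rejects p ∅ A
  · obtain ⟨b, hb, hbA, hrej⟩ := exists_strictMono_rejects hA h₀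
    have hrange : range b ⊆ A := range_subset_iff.2 hbA
    refine ⟨range b, hrange, infinite_range_of_injective hb.injective,
      Or.inr fun X hX hXi hpX => ?_⟩
    obtain ⟨n, hn⟩ := hp X (hX.trans hrange) hXi
    have hsub : initPart X n ⊆ (Finset.range n).image b := fun a ha => by
      obtain ⟨haX, han⟩ := mem_initPart.1 ha
      obtain ⟨m, rfl⟩ := hX haX
      exact Finset.mem_image_of_mem b (Finset.mem_range.2 (hb.le_apply.trans_lt han))
    refine hrej n _ hsub _ subset_rfl ((Ici_infinite n).image hb.injective.injOn)
      fun T hT hTi _ => ?_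
    have hTn : ∀ y ∈ T, n ≤ y := fun y hy => by
      obtain ⟨m, hm, rfl⟩ := hT hy
      exact (mem_Ici.1 hm).trans hb.le_apply
    have hsA : (↑(initPart X n) : Set ℕ) ⊆ A :=
      fun a ha => hrange (hX (mem_initPart.1 ha).1)
    have hTA : T ⊆ A := (hT.trans (image_subset_range _ _)).trans hrange
    rwa [hn _ (union_subset hsA hTA) (hTi.mono subset_union_right)
      fun m hm => mem_initPart_union_iff hTn hm]
  · simp only [Rejects, not_forall, not_not, exists_prop] at h₀
    obtain ⟨B, hBA, hB, hacc⟩ := h₀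
    exact ⟨B, hBA, hB, Or.inl fun X hX hXi => by simpa using hacc X hX hXi (by simp)⟩

theorem exists_const_of_finset {β : Type*} {c : Set ℕ → β} (F : Finset β) (hA : A.Infinite)
    (hc : IsLocallyConstantOnInfinite c A) (hcF : ∀ X ⊆ A, X.Infinite → c X ∈ F) :
    ∃ N ⊆ A, N.Infinite ∧ ∃ v, ∀ X ⊆ N, X.Infinite → c X = v := by
  classical
  induction F using Finset.induction_on generalizing A with
  | empty => exact absurd (hcF A subset_rfl hA) (Finset.notMem_empty _)
  | insert v F _ ih =>
    obtain ⟨N, hNA, hN, hv | hF⟩ := exists_homogeneous hA (hc.comp (· = v))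
    · exact ⟨N, hNA, hN, v, hv⟩
    · obtain ⟨N', hN'N, hN', w, hw⟩ := ih hN (hc.mono hNA) fun X hX hXi =>
        (Finset.mem_insert.1 (hcF X (hX.trans hNA) hXi)).resolve_left (hF X hX hXi)
      exact ⟨N', hN'N.trans hNA, hN', w, hw⟩

end Galvin

section Barriers

variable {B : Set (Finset ℕ)} {s t : Finset ℕ} {X Y : Set ℕ}

theorem InitSegSet.subset_or_subset (hs : InitSegSet s X) (ht : InitSegSet t X) :
    s ⊆ t ∨ t ⊆ s := by
  by_contra! h
  obtain ⟨a, has, hat⟩ := Finset.not_subset.1 h.1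
  obtain ⟨b, hbt, hbs⟩ := Finset.not_subset.1 h.2
  exact lt_asymm (hs.2 a has b (ht.1 hbt) hbs) (ht.2 b hbt a (hs.1 has) hat)

theorem InitSegSet.sInf_mem (hs : InitSegSet s X) (hne : s.Nonempty) : sInf X ∈ s := by
  obtain ⟨x, hx⟩ := hne
  by_contra h
  exact (hs.2 x hx _ (Nat.sInf_mem ⟨x, hs.1 hx⟩) h).not_ge (Nat.sInf_le (hs.1 hx))

theorem InitSegSet.erase_sInf (hs : InitSegSet s X) :
    InitSegSet (s.erase (sInf X)) (eraseMin X) := by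
  refine ⟨fun x hx => ?_, fun x hx y hy hys => hs.2 x (Finset.mem_of_mem_erase hx) y hy.1 ?_⟩
  · rw [Finset.coe_erase] at hx
    exact ⟨hs.1 hx.1, hx.2⟩
  · exact fun h => hys (Finset.mem_erase.2 ⟨hy.2, h⟩)

theorem InitSegSet.of_agree {n : ℕ} (hs : InitSegSet s X) (hn : s ⊆ Finset.range n)
    (hag : ∀ m < n, m ∈ Y ↔ m ∈ X) : InitSegSet s Y := by
  refine ⟨fun x hx => (hag x (Finset.mem_range.1 (hn hx))).2 (hs.1 hx), fun x hx y hy hys => ?_⟩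
  by_cases hyn : y < n
  · exact hs.2 x hx y ((hag y hyn).1 hy) hys
  · exact (Finset.mem_range.1 (hn hx)).trans_le (not_lt.1 hyn)

theorem unionOf_infinite (hB : B.Infinite) : (unionOf B).Infinite := fun h =>
  hB <| (h.toFinset.powerset : Set (Finset ℕ)).toFinite.subset fun _ hs =>
    Finset.mem_powerset.2 fun _ hx => h.mem_toFinset.2 (mem_biUnion hs hx)

theorem IsBarrier.eq_of_initSegSet (hB : IsBarrier B) (hs : s ∈ B) (ht : t ∈ B)
    (hsX : InitSegSet s X) (htX : InitSegSet t X) : s = t :=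
  (hsX.subset_or_subset htX).elim (hB.2 s hs t ht) fun h => (hB.2 t ht s hs h).symm

/-- The witness for `s ◁ t` is `insert (min X) t`. -/
theorem IsBarrier.tri_of_initSegSet (hB : IsBarrier B) (hs : s ∈ B) (ht : t ∈ B)
    (hne : s.Nonempty) (hsX : InitSegSet s X) (htX : InitSegSet t (eraseMin X)) : Tri s t := by
  have hms : sInf X ∈ s := hsX.sInf_mem hne
  have hmt : sInf X ∉ t := fun h => (htX.1 h).2 rfl
  have hts : ¬ t ⊆ s := fun h => hmt (hB.2 t ht s hs h ▸ hms)
  have hst : s.erase (sInf X) ⊆ t := (hsX.erase_sInf.subset_or_subset htX).resolve_right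
    fun h => hts (h.trans (Finset.erase_subset _ _))
  refine ⟨insert (sInf X) t, ⟨?_, fun x hx y hy hys => ?_⟩, ?_, sInf X,
    Finset.mem_insert_self _ _, fun y hy => ?_, (Finset.erase_insert hmt).symm⟩
  · rw [← Finset.insert_erase hms]
    exact Finset.insert_subset_insert _ hst
  · rcases Finset.mem_insert.1 hy with rfl | hy
    · exact absurd hms hys
    · exact hsX.2 x hx y (eraseMin_subset (htX.1 hy)) hys
  · exact fun h => hts (h ▸ Finset.subset_insert _ _)
  · rcases Finset.mem_insert.1 hy with rfl | hy
    · exact le_rfl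
    · exact Nat.sInf_le (eraseMin_subset (htX.1 hy))

open Classical in
/-- The member of the block `B` that is an initial segment of `X`. -/
noncomputable def segIn (B : Set (Finset ℕ)) (X : Set ℕ) : Finset ℕ :=
  if h : ∃ s ∈ B, s.Nonempty ∧ InitSegSet s X then h.choose else ∅

theorem IsBlock.segIn_spec (hB : IsBlock B) (hXB : X ⊆ unionOf B) (hX : X.Infinite) :
    segIn B X ∈ B ∧ (segIn B X).Nonempty ∧ InitSegSet (segIn B X) X := by
  have h := hB.2 X hXB hX
  rw [segIn, dif_pos h]
  exact h.choose_spec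

theorem IsBarrier.segIn_eq (hB : IsBarrier B) (hXB : X ⊆ unionOf B) (hX : X.Infinite)
    (hs : s ∈ B) (hsX : InitSegSet s X) : segIn B X = s :=
  have h := hB.1.segIn_spec hXB hX
  hB.eq_of_initSegSet h.1 hs h.2.2 hsX

theorem IsBarrier.isLocallyConstantOnInfinite_segIn (hB : IsBarrier B) :
    IsLocallyConstantOnInfinite (segIn B) (unionOf B) := by
  intro X hXB hX
  obtain ⟨n, hn⟩ := (segIn B X).exists_nat_subset_range
  have h := hB.1.segIn_spec hXB hX
  exact ⟨n, fun Y hYB hY hag => hB.segIn_eq hYB hY h.1 (h.2.2.of_agree hn hag)⟩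

theorem IsBarrier.tri_segIn_eraseMin (hB : IsBarrier B) (hXB : X ⊆ unionOf B)
    (hX : X.Infinite) : Tri (segIn B X) (segIn B (eraseMin X)) := by
  have h := hB.1.segIn_spec hXB hX
  have h' := hB.1.segIn_spec (eraseMin_subset.trans hXB) hX.eraseMin
  exact hB.tri_of_initSegSet h.1 h'.1 h.2.1 h.2.2 h'.2.2

end Barriers

section ContinuousMaps

variable {P : Type*} {g : Set ℕ → P} {N : Set ℕ}

theorem exists_idealLE_eraseMin [Preorder P] [WellQuasiOrderedLE P]
    (hchain : IsChain (· ⊆ ·) {I : Set P | IsNonprincipalIdeal I}) (hN : N.Infinite)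
    (g : Set ℕ → P) : ∃ X ⊆ N, X.Infinite ∧ IdealLE (g X) (g (eraseMin X)) := by
  obtain ⟨k, hk⟩ := exists_idealLE_succ hchain fun k => g (eraseMin^[k] N)
  refine ⟨eraseMin^[k] N, iterate_eraseMin_subset k, hN.iterate_eraseMin k, ?_⟩
  rwa [Function.iterate_succ_apply'] at hk

/-- Erasing the minimum `a` of `insert a (S ∪ T)` leaves `S ∪ T`, so every value `g (S ∪ T)` is
`IdealLE`-above `q` but not `≤`-above it. By `exists_le_of_forall_idealLE` there are only finitely
many such values, and Galvin's lemma makes them constant. -/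
theorem exists_const_union_of_const_insert [PartialOrder P] [WellQuasiOrderedLE P]
    (hg : IsLocallyConstantOnInfinite g N)
    (hbad : ∀ X ⊆ N, X.Infinite → ¬ g X ≤ g (eraseMin X))
    (hideal : ∀ X ⊆ N, X.Infinite → IdealLE (g X) (g (eraseMin X)))
    {a : ℕ} {S M : Set ℕ} (haN : a ∈ N) (hSN : S ⊆ N) (hMN : M ⊆ N) (hM : M.Infinite)
    (haS : ∀ x ∈ S, a < x) (haM : ∀ y ∈ M, a < y) {q : P}
    (hq : ∀ T ⊆ M, T.Infinite → g (insert a (S ∪ T)) = q) :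
    ∃ M' ⊆ M, M'.Infinite ∧ ∃ q', ∀ T ⊆ M', T.Infinite → g (S ∪ T) = q' := by
  have hV : ∀ T ⊆ M, T.Infinite → IdealLE q (g (S ∪ T)) ∧ ¬ q ≤ g (S ∪ T) := by
    intro T hT hTi
    have hX : insert a (S ∪ T) ⊆ N := insert_subset haN (union_subset hSN (hT.trans hMN))
    have hXi : (insert a (S ∪ T)).Infinite := (hTi.mono subset_union_right).mono (subset_insert _ _)
    have herase : eraseMin (insert a (S ∪ T)) = S ∪ T :=
      eraseMin_insert fun y hy => hy.elim (haS y) fun hy => haM y (hT hy)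
    have h₁ := hideal _ hX hXi
    have h₂ := hbad _ hX hXi
    rw [herase, hq T hT hTi] at h₁ h₂
    exact ⟨h₁, h₂⟩
  have hVfin : {v | ∃ T ⊆ M, T.Infinite ∧ g (S ∪ T) = v}.Finite := by
    by_contra hVinf
    obtain ⟨_, ⟨T, hT, hTi, rfl⟩, hle⟩ := exists_le_of_forall_idealLE hVinf fun v hv => by
      obtain ⟨T, hT, hTi, rfl⟩ := hv
      exact (hV T hT hTi).1
    exact (hV T hT hTi).2 hle
  exact Galvin.exists_const_of_finset hVfin.toFinset hM ((hg.comp_union_left hSN).mono hMN)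
    fun T hT hTi => hVfin.mem_toFinset.2 ⟨T, hT, hTi, rfl⟩

theorem not_const_union [PartialOrder P] [WellQuasiOrderedLE P]
    (hg : IsLocallyConstantOnInfinite g N)
    (hbad : ∀ X ⊆ N, X.Infinite → ¬ g X ≤ g (eraseMin X))
    (hideal : ∀ X ⊆ N, X.Infinite → IdealLE (g X) (g (eraseMin X)))
    (e : Finset ℕ) (heN : ↑e ⊆ N) {M : Set ℕ} (hMN : M ⊆ N) (hM : M.Infinite)
    (heM : ∀ x ∈ e, ∀ y ∈ M, x < y) (q : P) : ¬ ∀ T ⊆ M, T.Infinite → g (↑e ∪ T) = q := by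
  classical
  induction e using Finset.induction_on_min generalizing M q with
  | empty =>
    intro hq
    have h₁ := hq M subset_rfl hM
    have h₂ := hq (eraseMin M) eraseMin_subset hM.eraseMin
    simp only [Finset.coe_empty, empty_union] at h₁ h₂
    exact hbad M hMN hM (h₁.trans h₂.symm).le
  | insert a s has ih =>
    intro hq
    rw [Finset.coe_insert, insert_subset_iff] at heN
    obtain ⟨M', hM'M, hM', q', hq'⟩ := exists_const_union_of_const_insert hg hbad hideal
      heN.1 heN.2 hMN hM has (heM a (Finset.mem_insert_self a s)) (q := q)
      fun T hT hTi => by rw [← insert_union, ← Finset.coe_insert]; exact hq T hT hTi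
    exact ih heN.2 (hM'M.trans hMN) hM'
      (fun x hx y hy => heM x (Finset.mem_insert_of_mem hx) y (hM'M hy)) q' hq'

/-- The case of `not_const_union` with `e = N ∩ [0, n)` and `M = N ∩ [n, ∞)`, where `n` comes from
the local constancy of `g` at `N`. -/
theorem exists_le_eraseMin_of_idealLE [PartialOrder P] [WellQuasiOrderedLE P] (hN : N.Infinite)
    (hg : IsLocallyConstantOnInfinite g N)
    (hideal : ∀ X ⊆ N, X.Infinite → IdealLE (g X) (g (eraseMin X))) :
    ∃ X ⊆ N, X.Infinite ∧ g X ≤ g (eraseMin X) := by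
  by_contra! hbad
  obtain ⟨n, hn⟩ := hg N subset_rfl hN
  have heN : (↑(initPart N n) : Set ℕ) ⊆ N := fun x hx => (mem_initPart.1 hx).1
  refine not_const_union hg hbad hideal (initPart N n) heN (M := N ∩ Ici n) inter_subset_left
    (hN.sdiff (finite_Iio n) |>.mono fun x hx => ⟨hx.1, not_lt.1 (mem_Iio.not.1 hx.2)⟩)
    (fun x hx y hy => (mem_initPart.1 hx).2.trans_le hy.2) (g N) fun T hT hTi => ?_
  exact hn _ (union_subset heN (hT.trans inter_subset_left)) (hTi.mono subset_union_right)
    fun m hm => mem_initPart_union_iff (fun y hy => (hT hy).2) hm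

theorem exists_le_eraseMin [PartialOrder P] [WellQuasiOrderedLE P]
    (hchain : IsChain (· ⊆ ·) {I : Set P | IsNonprincipalIdeal I}) {A : Set ℕ}
    (hA : A.Infinite) (hg : IsLocallyConstantOnInfinite g A) :
    ∃ X ⊆ A, X.Infinite ∧ g X ≤ g (eraseMin X) := by
  obtain ⟨N, hNA, hN, hideal | hnot⟩ :=
    Galvin.exists_homogeneous hA (hg.map₂ hg.comp_eraseMin IdealLE)
  · obtain ⟨X, hXN, hX, hle⟩ := exists_le_eraseMin_of_idealLE hN (hg.mono hNA) hideal
    exact ⟨X, hXN.trans hNA, hX, hle⟩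
  · obtain ⟨X, hXN, hX, hle⟩ := exists_idealLE_eraseMin hchain hN g
    exact absurd hle (hnot X hXN hX)

end ContinuousMaps

/-- If `P` is wqo and the set of non-principal ideals of `P` is linearly ordered by
inclusion, then `P` is bqo. -/
theorem stmt4 {P : Type*} [PartialOrder P]
    (hwqo : IsWqo ((· ≤ ·) : P → P → Prop))
    (hchain : ∀ I J : Set P,
      IsIdealRel (· ≤ ·) I → ¬ IsPrincipalRel (· ≤ ·) I →
      IsIdealRel (· ≤ ·) J → ¬ IsPrincipalRel (· ≤ ·) J → I ⊆ J ∨ J ⊆ I) :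
    IsBqo ((· ≤ ·) : P → P → Prop) := by
  intro B hB f
  have := hwqo.wellQuasiOrderedLE
  have hchain' : IsChain (· ⊆ ·) {I : Set P | IsNonprincipalIdeal I} :=
    fun I hI J hJ _ => hchain I J hI.1 hI.2 hJ.1 hJ.2
  obtain ⟨X, hXB, hX, hle⟩ := exists_le_eraseMin hchain' (unionOf_infinite hB.1.1)
    (hB.isLocallyConstantOnInfinite_segIn.comp f)
  exact ⟨_, (hB.1.segIn_spec hXB hX).1, _, (hB.1.segIn_spec (eraseMin_subset.trans hXB)
    hX.eraseMin).1, hB.tri_segIn_eraseMin hXB hX, hle⟩
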